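/- arXiv:1902.04460 — 2 statements merged into one kernel-verified Lean document; each statement's English description precedes it below -/
import Mathlib

section
/- Let Γ be a discrete subgroup of E(n), and let (G, V) be a finite index cocompact translation pair of Γ. Then N_Γ(r) = Θ(N_G(r)) = Θ(N_G^V(r)) = Θ(r^{dim V}), where dim V is the dimension of the affine subspace V. In particular, the counting function N_Γ grows polynomially of exact order dim V. -/
open Metric Filter MeasureTheory Asymptotics

noncomputable section

/-- `ℝⁿ` as a Euclidean space. -/
abbrev En (n : ℕ) := EuclideanSpace ℝ (Fin n)

/-- The Euclidean group `E(n)`, i.e. the isometry group of `ℝⁿ`. -/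
abbrev Isom (n : ℕ) := En n ≃ᵢ En n

/-- The translation part `tran γ = γ 0` of a Euclidean isometry
(for `γ : x ↦ Ax + a` this is `a`). -/
def tran {n : ℕ} (γ : Isom n) : En n := γ 0

/-- The orthogonal part `ort γ` of a Euclidean isometry, as a self-map of `ℝⁿ`
(for `γ : x ↦ Ax + a` this is the map `x ↦ Ax`). -/
def ort {n : ℕ} (γ : Isom n) : En n → En n := fun x => γ x - γ 0

/-- A subgroup `Γ ≤ E(n)` is discrete (in the topology of `O(n) × ℝⁿ`) if and only if the
identity is isolated in `Γ`; the metric `sup_{‖x‖ ≤ 1} ‖γ x - x‖` induces that topology. -/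
def IsDiscreteSubgroup {n : ℕ} (Γ : Subgroup (Isom n)) : Prop :=
  ∃ ε > 0, ∀ γ ∈ Γ, γ ≠ 1 → ∃ x : En n, ‖x‖ ≤ 1 ∧ ε ≤ dist (γ x) x

/-- The subgroup of all translations of `ℝⁿ` inside the isometry group; the translation
subgroup `Γ_T` of a subgroup `Γ ≤ E(n)` is then `Γ ⊓ Translations n`. -/
def Translations (n : ℕ) : Subgroup (Isom n) where
  carrier := {γ : Isom n | ∀ x : En n, γ x = x + γ 0}
  one_mem' := by intro x; simp
  mul_mem' := by
    intro a b ha hb x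
    show a (b x) = x + a (b 0)
    rw [hb x, ha (x + b 0), hb 0, ha (0 + b 0)]
    abel
  inv_mem' := by
    intro a ha x
    show a.symm x = x + a.symm 0
    apply a.injective
    have h0 : a (a.symm 0) = 0 := a.apply_symm_apply 0
    rw [a.apply_symm_apply, ha (x + a.symm 0)]
    have hsum : a.symm 0 + a 0 = 0 := by
      have := ha (a.symm 0); rw [h0] at this; exact this.symm
    rw [add_assoc, hsum, add_zero]

/-- `(G, V)` is a cocompact translation pair of `Γ`: `G ≤ Γ`, `V` is a (nonempty) affine
subspace of `ℝⁿ` with `GV = V`, every `g ∈ G` restricts to `V` as a translation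
(by the vector `v = tran_V(g)`), and `V/G` is compact. -/
structure IsCocompactTranslationPair {n : ℕ} (Γ G : Subgroup (Isom n))
    (V : AffineSubspace ℝ (En n)) : Prop where
  le : G ≤ Γ
  nonempty : (V : Set (En n)).Nonempty
  invariant : ∀ g ∈ G, ∀ x ∈ (V : Set (En n)), g x ∈ (V : Set (En n))
  translation : ∀ g ∈ G, ∃ v : En n, ∀ x ∈ (V : Set (En n)), g x = x + v
  cocompact : ∃ K : Set (En n), IsCompact K ∧ K ⊆ (V : Set (En n)) ∧
    ∀ x ∈ (V : Set (En n)), ∃ g ∈ G, g x ∈ K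

/-- `N_Γ(r)`: the number of `γ ∈ Γ` with `|tran γ| ≤ r`. -/
def NCount {n : ℕ} (Γ : Subgroup (Isom n)) (r : ℝ) : ℕ :=
  {γ : Isom n | γ ∈ Γ ∧ ‖tran γ‖ ≤ r}.ncard

/-- `N_G^V(r)`: the number of `γ ∈ G` whose translation vector `tran_V γ` on `V`
satisfies `|tran_V γ| ≤ r`. -/
def NVCount {n : ℕ} (G : Subgroup (Isom n)) (V : AffineSubspace ℝ (En n)) (r : ℝ) : ℕ :=
  {γ : Isom n | γ ∈ G ∧ ∃ v : En n,
    (∀ x ∈ (V : Set (En n)), γ x = x + v) ∧ ‖v‖ ≤ r}.ncard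

/-- `Λ_G(r)`: the number of distinct orthogonal parts `ort γ` over `γ ∈ G` with
`|tran γ| ≤ r`. -/
def LamCount {n : ℕ} (G : Subgroup (Isom n)) (r : ℝ) : ℕ :=
  {f : En n → En n | ∃ γ, γ ∈ G ∧ ‖tran γ‖ ≤ r ∧ f = ort γ}.ncard

/-- `Λ_G^V(r)`: the number of distinct orthogonal parts `ort γ` over `γ ∈ G` with
`|tran_V γ| ≤ r`. -/
def LamVCount {n : ℕ} (G : Subgroup (Isom n)) (V : AffineSubspace ℝ (En n)) (r : ℝ) : ℕ :=
  {f : En n → En n | ∃ γ, γ ∈ G ∧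
    (∃ v : En n, (∀ x ∈ (V : Set (En n)), γ x = x + v) ∧ ‖v‖ ≤ r) ∧ f = ort γ}.ncard

/-!
Fix `p ∈ V`. On `G`, `g ↦ g p - p` is a homomorphism into `V.direction`; discreteness makes its
fibres finite and its image `L` uniformly discrete, and cocompactness makes `L` coarsely dense.
Comparing Haar volumes of balls then gives `#(L ∩ B(r)) = Θ(r ^ dim V)`, hence
`N_G^V(r) = Θ(r ^ dim V)`. For any isometry, `‖γ p - p‖` and `‖γ 0‖` differ by at most `2‖p‖`,
and `Γ` is covered by finitely many translates `t G`; so `N_G` and `N_Γ` are squeezed between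
shifted multiples `m · N(r + c)` of one another, which does not change a `Θ(r ^ d)` class.
-/

open Set Module
open scoped Pointwise

theorem isBigO_of_le_mul {α : Type*} {l : Filter α} {f g : α → ℝ} (hf : ∀ᶠ x in l, 0 ≤ f x)
    {m : ℝ} (h : ∀ᶠ x in l, f x ≤ m * g x) : f =O[l] g :=
  IsBigO.of_bound |m| <| by
    filter_upwards [hf, h] with x hfx hx
    rw [Real.norm_of_nonneg hfx, Real.norm_eq_abs, ← abs_mul]
    exact hx.trans (le_abs_self _)

theorem isTheta_pow_comp_add_const {g : ℝ → ℝ} {d : ℕ} (hg : g =Θ[atTop] (· ^ d)) (c : ℝ) :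
    (fun r => g (r + c)) =Θ[atTop] (· ^ d) := by
  have hshift : (fun r : ℝ => r + c) ~[atTop] id :=
    IsEquivalent.refl.add_isLittleO (isLittleO_const_id_atTop c)
  have hc := tendsto_atTop_add_const_right atTop c tendsto_id
  exact IsTheta.trans ⟨hg.1.comp_tendsto hc, hg.2.comp_tendsto hc⟩ (hshift.pow d).isTheta

theorem isTheta_pow_of_le_mul_comp_add {f g : ℝ → ℝ} {d : ℕ} (hg : g =Θ[atTop] (· ^ d))
    (hf : ∀ᶠ r in atTop, 0 ≤ f r) (hg₀ : ∀ᶠ r in atTop, 0 ≤ g r) {m₁ c₁ m₂ c₂ : ℝ}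
    (hlo : ∀ᶠ r in atTop, g r ≤ m₁ * f (r + c₁)) (hhi : ∀ᶠ r in atTop, f r ≤ m₂ * g (r + c₂)) :
    f =Θ[atTop] (· ^ d) := by
  refine ⟨(isBigO_of_le_mul hf hhi).trans (isTheta_pow_comp_add_const hg c₂).isBigO, ?_⟩
  have hshift := tendsto_atTop_add_const_right atTop (-c₁) tendsto_id
  have hlo' : (fun r => g (r + -c₁)) =O[atTop] f :=
    isBigO_of_le_mul (hshift.eventually hg₀) <| by
      filter_upwards [hshift.eventually hlo] with r hr
      simpa using hr
  exact (isTheta_pow_comp_add_const hg (-c₁)).symm.isBigO.trans hlo'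

theorem Set.ncard_le_ncard_mul_ncard_of_subset_mul {G : Type*} [Group G] {s T K : Set G}
    (hT : T.Finite) (hK : K.Finite) (h : s ⊆ T * K) : s.ncard ≤ T.ncard * K.ncard :=
  (ncard_le_ncard h (hT.mul hK)).trans <| by
    simpa only [Nat.card_coe_set_eq] using natCard_mul_le (s := T) (t := K)

theorem MonoidHom.ncard_le_card_ker_mul_ncard_image {H M : Type*} [Group H] [Group M]
    (φ : H →* M) [Finite φ.ker] (s : Set H) : s.ncard ≤ Nat.card φ.ker * (φ '' s).ncard := by
  obtain hs | hs := s.finite_or_infinite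
  swap
  · simp [hs.ncard]
  set σ := Function.invFunOn φ s
  have hmul : s ⊆ σ '' (φ '' s) * φ.ker := fun x hx => by
    have hσx : φ (σ (φ x)) = φ x := Function.invFunOn_eq ⟨x, hx, rfl⟩
    refine mem_mul.2 ⟨σ (φ x), mem_image_of_mem _ (mem_image_of_mem _ hx), (σ (φ x))⁻¹ * x, ?_,
      mul_inv_cancel_left _ _⟩
    simp [MonoidHom.mem_ker, hσx]
  calc s.ncard ≤ (σ '' (φ '' s)).ncard * (φ.ker : Set H).ncard :=
        ncard_le_ncard_mul_ncard_of_subset_mul ((hs.image φ).image σ) (toFinite _) hmul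
    _ ≤ (φ '' s).ncard * Nat.card φ.ker := by
        rw [← Nat.card_coe_set_eq (φ.ker : Set H)]
        exact Nat.mul_le_mul_right _ (ncard_image_le (hs.image φ))
    _ = Nat.card φ.ker * (φ '' s).ncard := mul_comm _ _

theorem Subgroup.exists_finite_subset_mul_of_relIndex_ne_zero {H : Type*} [Group H]
    {G Γ : Subgroup H} (h : G.relIndex Γ ≠ 0) : ∃ T : Set H, T.Finite ∧ (Γ : Set H) ⊆ T * G := by
  have : (G.subgroupOf Γ).FiniteIndex := ⟨h⟩
  refine ⟨range fun q : Γ ⧸ G.subgroupOf Γ => (q.out : H), finite_range _, fun γ hγ => ?_⟩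
  obtain ⟨g, hg⟩ := QuotientGroup.mk_out_eq_mul (G.subgroupOf Γ) ⟨γ, hγ⟩
  refine mem_mul.2 ⟨_, mem_range_self (QuotientGroup.mk ⟨γ, hγ⟩), ((g⁻¹ : G.subgroupOf Γ) : H),
    Subgroup.mem_subgroupOf.1 (g⁻¹).2, ?_⟩
  simp [hg]

theorem TotallyBounded.finite_of_pairwise_le_dist {X : Type*} [PseudoMetricSpace X] {s : Set X}
    (hs : TotallyBounded s) {δ : ℝ} (hδ : 0 < δ) (h : s.Pairwise fun x y => δ ≤ dist x y) :
    s.Finite := by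
  obtain ⟨t, ht, hcov⟩ := Metric.totallyBounded_iff.1 hs (δ / 2) (half_pos hδ)
  have hsub : s ⊆ ⋃ y ∈ t, s ∩ ball y (δ / 2) := fun x hx => by
    obtain ⟨y, hy, hxy⟩ := mem_iUnion₂.1 (hcov hx)
    exact mem_iUnion₂.2 ⟨y, hy, hx, hxy⟩
  refine (ht.biUnion fun y _ => Set.Subsingleton.finite ?_).subset hsub
  intro x hx x' hx'
  by_contra hne
  linarith [h hx.1 hx'.1 hne, dist_triangle_right x x' y, mem_ball.1 hx.2, mem_ball.1 hx'.2]

theorem exists_pos_forall_le_norm_of_finite {E : Type*} [NormedAddCommGroup E] {S : Set E}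
    (hS : (S ∩ closedBall 0 1).Finite) : ∃ δ > 0, ∀ x ∈ S, x ≠ 0 → δ ≤ ‖x‖ := by
  obtain ⟨ε, hε, hball⟩ := Metric.isOpen_iff.1 (hS.sdiff (t := {0})).isClosed.isOpen_compl 0
    (by simp)
  refine ⟨min ε 1, lt_min hε one_pos, fun x hxS hx0 => le_of_not_gt fun hlt => ?_⟩
  have hx1 : x ∈ closedBall (0 : E) 1 := by
    rw [mem_closedBall, dist_zero_right]; exact (hlt.trans_le (min_le_right _ _)).le
  have hxε : x ∈ ball (0 : E) ε := by
    rw [mem_ball, dist_zero_right]; exact hlt.trans_le (min_le_left _ _)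
  exact hball hxε ⟨⟨hxS, hx1⟩, hx0⟩

theorem measureReal_closedBall_pos {X : Type*} [PseudoMetricSpace X] [ProperSpace X]
    [MeasurableSpace X] (μ : Measure X) [μ.IsOpenPosMeasure] [IsFiniteMeasureOnCompacts μ]
    (x : X) {r : ℝ} (hr : 0 < r) : 0 < μ.real (closedBall x r) :=
  ENNReal.toReal_pos (measure_closedBall_pos μ x hr).ne' measure_closedBall_lt_top.ne

section FiniteDimensional

variable {E : Type*} [NormedAddCommGroup E] [NormedSpace ℝ E] [FiniteDimensional ℝ E]

theorem finite_inter_closedBall_of_pairwise_le_dist {S : Set E} {δ : ℝ} (hδ : 0 < δ)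
    (hsep : S.Pairwise fun x y => δ ≤ dist x y) (r : ℝ) : (S ∩ closedBall 0 r).Finite :=
  ((isCompact_closedBall 0 r).totallyBounded.subset inter_subset_right).finite_of_pairwise_le_dist
    hδ (hsep.mono inter_subset_left)

theorem pow_sub_le_ncard_inter_closedBall_mul {S : Set E} {R r : ℝ} (hRr : R ≤ r)
    (hdense : ∀ y, ∃ x ∈ S, dist y x ≤ R) (hfin : (S ∩ closedBall 0 r).Finite) :
    (r - R) ^ finrank ℝ E ≤ (S ∩ closedBall 0 r).ncard * R ^ finrank ℝ E := by
  -- Any Haar measure will do: only `μ (closedBall x r) = r ^ d * μ (closedBall 0 1)` is used.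
  let _ : MeasurableSpace E := borel E
  have : BorelSpace E := ⟨rfl⟩
  set μ : Measure E := Measure.addHaar
  obtain ⟨_, -, h₀⟩ := hdense 0
  have hR : 0 ≤ R := dist_nonneg.trans h₀
  have hcov : closedBall (0 : E) (r - R) ⊆ ⋃ x ∈ hfin.toFinset, closedBall x R := by
    intro y hy
    obtain ⟨x, hxS, hxy⟩ := hdense y
    refine mem_iUnion₂.2 ⟨x, hfin.mem_toFinset.2 ⟨hxS, ?_⟩, mem_closedBall.2 hxy⟩
    rw [mem_closedBall] at hy ⊢
    linarith [dist_triangle x y 0, dist_comm x y]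
  have hvol := (measureReal_mono (μ := μ) hcov (measure_biUnion_lt_top
    hfin.toFinset.finite_toSet fun x _ => measure_closedBall_lt_top).ne).trans
    (measureReal_biUnion_finset_le _ _)
  simp only [Measure.addHaar_real_closedBall' μ _ (sub_nonneg.2 hRr),
    Measure.addHaar_real_closedBall' μ _ hR, Finset.sum_const, nsmul_eq_mul,
    ← ncard_eq_toFinset_card _ hfin, ← mul_assoc] at hvol
  exact le_of_mul_le_mul_right hvol (measureReal_closedBall_pos μ 0 one_pos)

theorem ncard_inter_closedBall_mul_le {S : Set E} {δ r : ℝ} (hδ : 0 < δ) (hr : 0 ≤ r)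
    (hsep : S.Pairwise fun x y => δ ≤ dist x y) :
    (S ∩ closedBall 0 r).ncard * (δ / 3) ^ finrank ℝ E ≤ (r + δ / 3) ^ finrank ℝ E := by
  let _ : MeasurableSpace E := borel E
  have : BorelSpace E := ⟨rfl⟩
  set μ : Measure E := Measure.addHaar
  have hfin := finite_inter_closedBall_of_pairwise_le_dist hδ hsep r
  have hdisj : (hfin.toFinset : Set E).PairwiseDisjoint fun x => closedBall x (δ / 3) := by
    intro x hx y hy hxy
    have := hsep (hfin.mem_toFinset.1 hx).1 (hfin.mem_toFinset.1 hy).1 hxy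
    exact closedBall_disjoint_closedBall (by linarith)
  have hsub : ⋃ x ∈ hfin.toFinset, closedBall x (δ / 3) ⊆ closedBall (0 : E) (r + δ / 3) := by
    refine iUnion₂_subset fun x hx y hy => ?_
    have hx := (hfin.mem_toFinset.1 hx).2
    rw [mem_closedBall] at hx hy ⊢
    linarith [dist_triangle y x 0]
  have hvol := (measureReal_biUnion_finset (μ := μ) hdisj (fun _ _ => measurableSet_closedBall)
    fun _ _ => measure_closedBall_lt_top.ne).symm.trans_le
    (measureReal_mono hsub measure_closedBall_lt_top.ne)
  simp only [Measure.addHaar_real_closedBall' μ _ (by positivity : 0 ≤ δ / 3),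
    Measure.addHaar_real_closedBall' μ _ (by positivity : 0 ≤ r + δ / 3),
    Finset.sum_const, nsmul_eq_mul, ← ncard_eq_toFinset_card _ hfin, ← mul_assoc] at hvol
  exact le_of_mul_le_mul_right hvol (measureReal_closedBall_pos μ 0 one_pos)

theorem isTheta_ncard_inter_closedBall {S : Set E} {δ R : ℝ} (hδ : 0 < δ)
    (hsep : S.Pairwise fun x y => δ ≤ dist x y) (hdense : ∀ y, ∃ x ∈ S, dist y x ≤ R) :
    (fun r => ((S ∩ closedBall 0 r).ncard : ℝ)) =Θ[atTop] (· ^ finrank ℝ E) := by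
  refine isTheta_pow_of_le_mul_comp_add (isTheta_refl _ _)
    (Eventually.of_forall fun _ => Nat.cast_nonneg _)
    ((eventually_ge_atTop 0).mono fun r hr => pow_nonneg hr _) (m₁ := R ^ finrank ℝ E) (c₁ := R)
    (m₂ := ((δ / 3) ^ finrank ℝ E)⁻¹) (c₂ := δ / 3) ?_ ?_
  · filter_upwards [eventually_ge_atTop 0] with r hr
    have := pow_sub_le_ncard_inter_closedBall_mul (by linarith) hdense
      (finite_inter_closedBall_of_pairwise_le_dist hδ hsep (r + R))
    rwa [add_sub_cancel_right, mul_comm] at this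
  · filter_upwards [eventually_ge_atTop 0] with r hr
    rw [le_inv_mul_iff₀ (by positivity), mul_comm]
    exact ncard_inter_closedBall_mul_le hδ hr hsep

theorem MonoidHom.isTheta_ncard_norm_le {H : Type*} [Group H] (φ : H →* Multiplicative E)
    (hfin : ∀ r, {h | ‖(φ h).toAdd‖ ≤ r}.Finite) {R : ℝ}
    (hdense : ∀ y : E, ∃ h, dist y (φ h).toAdd ≤ R) :
    (fun r => ({h | ‖(φ h).toAdd‖ ≤ r}.ncard : ℝ)) =Θ[atTop] (· ^ finrank ℝ E) := by
  set ψ : H → E := fun h => (φ h).toAdd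
  set L := Set.range ψ
  have hball : ∀ r, L ∩ closedBall 0 r = ψ '' {h | ‖ψ h‖ ≤ r} := fun r => by
    ext x
    constructor
    · rintro ⟨⟨h, rfl⟩, hx⟩
      exact ⟨h, by simpa using hx, rfl⟩
    · rintro ⟨h, hh, rfl⟩
      exact ⟨mem_range_self h, by simpa using hh⟩
  obtain ⟨δ, hδ, hδle⟩ := exists_pos_forall_le_norm_of_finite (S := L)
    (by rw [hball]; exact (hfin 1).image ψ)
  have hsep : L.Pairwise fun x y => δ ≤ dist x y := by
    rintro _ ⟨a, rfl⟩ _ ⟨b, rfl⟩ hne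
    have hdiff : ψ (b⁻¹ * a) = ψ a - ψ b := by simp [ψ, sub_eq_neg_add]
    rw [dist_eq_norm, ← hdiff]
    exact hδle _ (mem_range_self _) (hdiff ▸ sub_ne_zero.2 hne)
  have hL := isTheta_ncard_inter_closedBall hδ hsep fun y =>
    let ⟨h, hh⟩ := hdense y; ⟨ψ h, mem_range_self h, hh⟩
  have : Finite φ.ker := ((hfin 0).subset fun h hh => by simp [MonoidHom.mem_ker.1 hh]).to_subtype
  refine isTheta_pow_of_le_mul_comp_add hL (Eventually.of_forall fun _ => Nat.cast_nonneg _)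
    (Eventually.of_forall fun _ => Nat.cast_nonneg _) (m₁ := 1) (c₁ := 0)
    (m₂ := Nat.card φ.ker) (c₂ := 0) (Eventually.of_forall fun r => ?_)
    (Eventually.of_forall fun r => ?_) <;> rw [add_zero]
  · rw [one_mul, hball]
    exact_mod_cast ncard_image_le (hfin r)
  · rw [hball, show ψ = Multiplicative.toAdd ∘ φ from rfl, image_comp,
      ncard_image_of_injective _ Multiplicative.toAdd.injective]
    exact_mod_cast φ.ncard_le_card_ker_mul_ncard_image _

end FiniteDimensional

namespace IsometryEquiv

variable {F : Type*} [NormedAddCommGroup F]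

theorem norm_symm_apply_le (γ : F ≃ᵢ F) (x : F) : ‖γ.symm x‖ ≤ ‖x‖ + ‖γ 0‖ :=
  calc ‖γ.symm x‖ = dist (γ.symm x) (γ.symm (γ 0)) := by rw [γ.symm_apply_apply, dist_zero_right]
    _ = dist x (γ 0) := γ.symm.dist_eq _ _
    _ ≤ ‖x‖ + ‖γ 0‖ := dist_le_norm_add_norm _ _

theorem abs_norm_apply_sub_sub_norm_apply_zero_le (γ : F ≃ᵢ F) (p : F) :
    |‖γ p - p‖ - ‖γ 0‖| ≤ 2 * ‖p‖ := by
  refine (abs_norm_sub_norm_le _ _).trans ?_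
  rw [sub_right_comm, two_mul]
  refine (norm_sub_le _ _).trans_eq ?_
  rw [← dist_eq_norm, γ.dist_eq, dist_zero_right]

variable [NormedSpace ℝ F]

def affineParts (γ : F ≃ᵢ F) : (F →L[ℝ] F) × F :=
  (γ.toRealLinearIsometryEquiv.toLinearIsometry.toContinuousLinearMap, γ 0)

theorem affineParts_injective : Function.Injective (affineParts (F := F)) := by
  intro γ γ' h
  ext x
  have hlin := congrArg (fun a => a.1 x) h
  have h0 := congrArg Prod.snd h
  simp only [affineParts, LinearIsometry.coe_toContinuousLinearMap,
    LinearIsometryEquiv.coe_toLinearIsometry, toRealLinearIsometryEquiv_apply] at hlin h0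
  rw [← sub_add_cancel (γ x) (γ 0), hlin, h0, sub_add_cancel]

theorem norm_affineParts_le (γ : F ≃ᵢ F) : ‖γ.affineParts‖ ≤ max 1 ‖γ 0‖ :=
  max_le_max (LinearIsometry.norm_toContinuousLinearMap_le _) le_rfl

theorem dist_apply_le_dist_affineParts_mul (γ γ' : F ≃ᵢ F) (z : F) :
    dist (γ z) (γ' z) ≤ dist γ.affineParts γ'.affineParts * (‖z‖ + 1) := by
  set A := γ.affineParts.1 - γ'.affineParts.1
  have hsplit : γ z - γ' z = A z + (γ 0 - γ' 0) := by
    simp [A, affineParts]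
    abel
  have hA : ‖A‖ ≤ dist γ.affineParts γ'.affineParts := by
    rw [← dist_eq_norm, Prod.dist_eq]; exact le_max_left _ _
  have h0 : ‖γ 0 - γ' 0‖ ≤ dist γ.affineParts γ'.affineParts := by
    rw [← dist_eq_norm, Prod.dist_eq]; exact le_max_right _ _
  calc dist (γ z) (γ' z) ≤ ‖A‖ * ‖z‖ + ‖γ 0 - γ' 0‖ := by
        rw [dist_eq_norm, hsplit]
        exact (norm_add_le _ _).trans (add_le_add_left (A.le_opNorm z) _)
    _ ≤ dist γ.affineParts γ'.affineParts * (‖z‖ + 1) := by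
        rw [mul_add_one]; gcongr

end IsometryEquiv

section EuclideanGroup

variable {n : ℕ}

theorem IsDiscreteSubgroup.mono {Γ G : Subgroup (Isom n)} (hΓ : IsDiscreteSubgroup Γ)
    (hGΓ : G ≤ Γ) : IsDiscreteSubgroup G :=
  let ⟨ε, hε, h⟩ := hΓ
  ⟨ε, hε, fun γ hγ => h γ (hGΓ hγ)⟩

theorem IsDiscreteSubgroup.finite_tran_le {Γ : Subgroup (Isom n)} (hΓ : IsDiscreteSubgroup Γ)
    (R : ℝ) : {γ | γ ∈ Γ ∧ ‖tran γ‖ ≤ R}.Finite := by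
  obtain ⟨ε, hε, hmove⟩ := hΓ
  set S := {γ | γ ∈ Γ ∧ ‖tran γ‖ ≤ R}
  -- `γ' γ⁻¹ ≠ 1` moves some unit vector `x` by `ε`, so `γ` and `γ'` differ by `ε` at `γ⁻¹ x`,
  -- a point of norm `≤ 1 + R`; hence the affine parts of `S` are uniformly separated.
  have hsep : (IsometryEquiv.affineParts '' S).Pairwise
      fun a b => ε / (|R| + 2) ≤ dist a b := by
    rintro _ ⟨γ, hγ, rfl⟩ _ ⟨γ', hγ', rfl⟩ hne
    have hne' : γ' * γ⁻¹ ≠ 1 := mul_inv_eq_one.not.2 fun h => hne (h ▸ rfl)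
    obtain ⟨x, hx, hεx⟩ := hmove _ (Γ.mul_mem hγ'.1 (Γ.inv_mem hγ.1)) hne'
    have hz : ‖γ.symm x‖ + 1 ≤ |R| + 2 := by
      linarith [γ.norm_symm_apply_le x, le_abs_self R, show ‖γ 0‖ ≤ R from hγ.2]
    rw [div_le_iff₀ (by positivity)]
    calc ε ≤ dist ((γ' * γ⁻¹) x) x := hεx
      _ = dist (γ' (γ.symm x)) (γ (γ.symm x)) := by rw [γ.apply_symm_apply]; rfl
      _ ≤ dist γ'.affineParts γ.affineParts * (‖γ.symm x‖ + 1) :=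
        IsometryEquiv.dist_apply_le_dist_affineParts_mul _ _ _
      _ ≤ dist γ.affineParts γ'.affineParts * (|R| + 2) := by rw [dist_comm]; gcongr
  have hbdd : IsometryEquiv.affineParts '' S ⊆ closedBall 0 (max 1 R) := by
    rintro _ ⟨γ, hγ, rfl⟩
    rw [mem_closedBall, dist_zero_right]
    exact γ.norm_affineParts_le.trans (max_le_max le_rfl hγ.2)
  exact (((isCompact_closedBall _ _).totallyBounded.subset hbdd).finite_of_pairwise_le_dist
    (by positivity) hsep).of_finite_image IsometryEquiv.affineParts_injective.injOn

theorem IsDiscreteSubgroup.finite_norm_apply_sub_le {G : Subgroup (Isom n)}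
    (hG : IsDiscreteSubgroup G) (p : En n) (r : ℝ) :
    {γ | γ ∈ G ∧ ‖γ p - p‖ ≤ r}.Finite := by
  refine (hG.finite_tran_le (r + 2 * ‖p‖)).subset fun γ ⟨hγ, hr⟩ => ⟨hγ, ?_⟩
  show ‖γ 0‖ ≤ r + 2 * ‖p‖
  linarith [abs_le.1 (γ.abs_norm_apply_sub_sub_norm_apply_zero_le p)]

theorem NCount_le_NCount_of_le {Γ G : Subgroup (Isom n)} (hΓ : IsDiscreteSubgroup Γ)
    (hGΓ : G ≤ Γ) (r : ℝ) : NCount G r ≤ NCount Γ r :=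
  ncard_le_ncard (fun _ hγ => ⟨hGΓ hγ.1, hγ.2⟩) (hΓ.finite_tran_le r)

theorem exists_NCount_le_mul_NCount_add {Γ G : Subgroup (Isom n)} (hG : IsDiscreteSubgroup G)
    (h : G.relIndex Γ ≠ 0) : ∃ m C : ℝ, ∀ r, (NCount Γ r : ℝ) ≤ m * NCount G (r + C) := by
  obtain ⟨T, hT, hΓT⟩ := Subgroup.exists_finite_subset_mul_of_relIndex_ne_zero h
  obtain ⟨C, hC⟩ := (hT.image fun t => ‖tran t‖).bddAbove
  refine ⟨T.ncard, C, fun r => ?_⟩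
  suffices hsub : {γ | γ ∈ Γ ∧ ‖tran γ‖ ≤ r} ⊆ T * {g | g ∈ G ∧ ‖tran g‖ ≤ r + C} from
    mod_cast ncard_le_ncard_mul_ncard_of_subset_mul hT (hG.finite_tran_le (r + C)) hsub
  rintro _ ⟨hγ, hγr⟩
  obtain ⟨t, ht, g, hg, rfl⟩ := mem_mul.1 (hΓT hγ)
  refine mem_mul.2 ⟨t, ht, g, ⟨hg, ?_⟩, rfl⟩
  have htC : ‖t 0‖ ≤ C := hC (mem_image_of_mem _ ht)
  calc ‖tran g‖ = ‖t.symm ((t * g) 0)‖ := by simp [tran]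
    _ ≤ ‖(t * g) 0‖ + ‖t 0‖ := t.norm_symm_apply_le _
    _ ≤ r + C := add_le_add hγr htC

end EuclideanGroup

namespace IsCocompactTranslationPair

variable {n : ℕ} {Γ G : Subgroup (Isom n)} {V : AffineSubspace ℝ (En n)} {p : En n}

theorem apply_eq_add_apply_sub (hpair : IsCocompactTranslationPair Γ G V) (hp : p ∈ V)
    {g : Isom n} (hg : g ∈ G) {x : En n} (hx : x ∈ V) : g x = x + (g p - p) := by
  obtain ⟨v, hv⟩ := hpair.translation g hg
  rw [hv x hx, hv p hp, add_sub_cancel_left]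

theorem apply_sub_mem_direction (hpair : IsCocompactTranslationPair Γ G V) (hp : p ∈ V)
    {g : Isom n} (hg : g ∈ G) : g p - p ∈ V.direction :=
  AffineSubspace.vsub_mem_direction (hpair.invariant g hg p hp) hp

/-- `g ↦ tran_V(g)`, computed at the base point `p`. -/
def translationHom (hpair : IsCocompactTranslationPair Γ G V) (hp : p ∈ V) :
    G →* Multiplicative V.direction :=
  MonoidHom.mk' (fun g => .ofAdd ⟨(g : Isom n) p - p, hpair.apply_sub_mem_direction hp g.2⟩)
    fun g h => by
      rw [← ofAdd_add]
      congr 1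
      apply Subtype.ext
      simp only [Subgroup.coe_mul, IsometryEquiv.mul_apply, Submodule.coe_add]
      rw [hpair.apply_eq_add_apply_sub hp g.2 (hpair.invariant h h.2 p hp)]
      abel

@[simp]
theorem coe_toAdd_translationHom (hpair : IsCocompactTranslationPair Γ G V) (hp : p ∈ V)
    (g : G) : ((hpair.translationHom hp g).toAdd : En n) = (g : Isom n) p - p :=
  rfl

theorem NVCount_eq_ncard (hpair : IsCocompactTranslationPair Γ G V) (hp : p ∈ V) (r : ℝ) :
    NVCount G V r = {γ | γ ∈ G ∧ ‖γ p - p‖ ≤ r}.ncard := by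
  refine congrArg ncard (ext fun γ => and_congr_right fun hγ => ⟨?_, fun hr => ?_⟩)
  · rintro ⟨v, hv, hvr⟩
    rwa [hv p hp, add_sub_cancel_left]
  · exact ⟨_, fun x hx => hpair.apply_eq_add_apply_sub hp hγ hx, hr⟩

theorem NCount_le_NVCount_add (hpair : IsCocompactTranslationPair Γ G V) (hp : p ∈ V)
    (hG : IsDiscreteSubgroup G) (r : ℝ) : NCount G r ≤ NVCount G V (r + 2 * ‖p‖) := by
  rw [hpair.NVCount_eq_ncard hp]
  refine ncard_le_ncard (fun γ ⟨hγ, hr⟩ => ⟨hγ, ?_⟩) (hG.finite_norm_apply_sub_le p _)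
  have hr' : ‖γ 0‖ ≤ r := hr
  linarith [abs_le.1 (γ.abs_norm_apply_sub_sub_norm_apply_zero_le p)]

theorem NVCount_le_NCount_add (hpair : IsCocompactTranslationPair Γ G V) (hp : p ∈ V)
    (hG : IsDiscreteSubgroup G) (r : ℝ) : NVCount G V r ≤ NCount G (r + 2 * ‖p‖) := by
  rw [hpair.NVCount_eq_ncard hp]
  refine ncard_le_ncard (fun γ ⟨hγ, hr⟩ => ⟨hγ, ?_⟩) (hG.finite_tran_le _)
  show ‖γ 0‖ ≤ r + 2 * ‖p‖
  linarith [abs_le.1 (γ.abs_norm_apply_sub_sub_norm_apply_zero_le p)]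

theorem exists_dist_translationHom_le (hpair : IsCocompactTranslationPair Γ G V) (hp : p ∈ V) :
    ∃ R, ∀ y : V.direction, ∃ g, dist y (hpair.translationHom hp g).toAdd ≤ R := by
  obtain ⟨K, hK, -, hcov⟩ := hpair.cocompact
  obtain ⟨R, hR⟩ := hK.isBounded.subset_closedBall p
  refine ⟨R, fun y => ?_⟩
  have hx : (y : En n) + p ∈ V := by
    simpa using AffineSubspace.vadd_mem_of_mem_direction y.2 hp
  obtain ⟨g, hg, hgK⟩ := hcov _ hx
  refine ⟨⟨g, hg⟩⁻¹, ?_⟩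
  have hgR := mem_closedBall.1 (hR hgK)
  rw [hpair.apply_eq_add_apply_sub hp hg hx] at hgR
  convert hgR using 1
  rw [Subtype.dist_eq, dist_eq_norm, dist_eq_norm, map_inv, toAdd_inv, Submodule.coe_neg,
    coe_toAdd_translationHom]
  congr 1
  abel

theorem isTheta_NVCount (hpair : IsCocompactTranslationPair Γ G V) (hp : p ∈ V)
    (hG : IsDiscreteSubgroup G) :
    (fun r => (NVCount G V r : ℝ)) =Θ[atTop] (· ^ Module.finrank ℝ V.direction) := by
  obtain ⟨R, hR⟩ := hpair.exists_dist_translationHom_le hp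
  have hcount : ∀ r, NVCount G V r = {g | ‖(hpair.translationHom hp g).toAdd‖ ≤ r}.ncard :=
    fun r => by
      rw [hpair.NVCount_eq_ncard hp, ← ncard_image_of_injective _ Subtype.val_injective]
      congr 1
      ext γ
      exact ⟨fun ⟨hγ, hr⟩ => ⟨⟨γ, hγ⟩, hr, rfl⟩, fun ⟨g, hg, hgγ⟩ => hgγ ▸ ⟨g.2, hg⟩⟩
  simp only [hcount]
  refine (hpair.translationHom hp).isTheta_ncard_norm_le (fun r => ?_) hR
  exact ((hG.finite_norm_apply_sub_le p r).preimage Subtype.val_injective.injOn).subset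
    fun g hg => ⟨g.2, hg⟩

end IsCocompactTranslationPair

/-- For a finite index cocompact translation pair `(G, V)` of a discrete
`Γ ≤ E(n)`: `N_Γ(r) = Θ(N_G(r)) = Θ(N_G^V(r)) = Θ(r^{dim V})`. -/
theorem counting_growth_theta {n : ℕ} (Γ G : Subgroup (Isom n))
    (V : AffineSubspace ℝ (En n)) (hΓ : IsDiscreteSubgroup Γ)
    (hpair : IsCocompactTranslationPair Γ G V) (hfin : G.relIndex Γ ≠ 0) :
    (fun r : ℝ => (NCount Γ r : ℝ)) =Θ[atTop] (fun r : ℝ => (NCount G r : ℝ)) ∧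
    (fun r : ℝ => (NCount G r : ℝ)) =Θ[atTop] (fun r : ℝ => (NVCount G V r : ℝ)) ∧
    (fun r : ℝ => (NVCount G V r : ℝ)) =Θ[atTop]
      (fun r : ℝ => r ^ (Module.finrank ℝ V.direction)) := by
  obtain ⟨p, hp⟩ := hpair.nonempty
  have hG := hΓ.mono hpair.le
  have hcast : ∀ (f : ℝ → ℕ), ∀ᶠ r in atTop, (0 : ℝ) ≤ f r :=
    fun _ => Eventually.of_forall fun _ => Nat.cast_nonneg _
  have hNV := hpair.isTheta_NVCount hp hG
  have hNG := isTheta_pow_of_le_mul_comp_add hNV (hcast _) (hcast _) (m₁ := 1) (m₂ := 1)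
    (Eventually.of_forall fun r => by simpa using hpair.NVCount_le_NCount_add hp hG r)
    (Eventually.of_forall fun r => by simpa using hpair.NCount_le_NVCount_add hp hG r)
  obtain ⟨m, C, hmC⟩ := exists_NCount_le_mul_NCount_add hG hfin
  have hNΓ := isTheta_pow_of_le_mul_comp_add hNG (hcast _) (hcast _) (m₁ := 1) (c₁ := 0)
    (Eventually.of_forall fun r => by simpa using NCount_le_NCount_of_le hΓ hpair.le r)
    (Eventually.of_forall hmC)
  exact ⟨hNΓ.trans hNG.symm, hNG.trans hNV.symm, hNV⟩
end
end

section
/- Let Γ be a discrete subgroup of E(n), and let A = λA′ where A′ ∈ O(n) and λ > 0. Suppose that AΓA⁻¹ ⊆ Γ. Then AΓA⁻¹ is a subgroup of finite index in Γ. -/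
open Metric Filter MeasureTheory Asymptotics

noncomputable section

/-!
Conjugation `c : γ ↦ AγA⁻¹` is an injective endomorphism of `Γ` that multiplies translation
lengths by `λ`. Discreteness forces polynomial growth: a packing argument bounds the number
`N(r)` of elements of `Γ` with translation length `≤ r` by `C (r + 1)^d`. If `g₁, …, gₘ ∈ Γ` lie in
distinct cosets of `c(Γ)`, the products `gᵢ c(γ)` are pairwise distinct, so
`m N(r) ≤ N(μ r + M)` with `μ = max λ 2`. Iterating gives `mᵏ ≤ N(rₖ)` with `rₖ = O(μᵏ)`, which
is compatible with polynomial growth only if `m ≤ μ^d`; hence the index is finite.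
-/

open Module
open scoped ENNReal

section Packing

variable {E : Type*} [NormedAddCommGroup E] [NormedSpace ℝ E] [FiniteDimensional ℝ E]

theorem Finset.card_le_of_pairwise_le_dist {F : Finset E} {ε R : ℝ} (hε : 0 < ε) (hR : 0 ≤ R)
    (hF : ∀ p ∈ F, ‖p‖ ≤ R) (hsep : (F : Set E).Pairwise fun p q => ε ≤ dist p q) :
    (F.card : ℝ) ≤ (2 * R / ε + 1) ^ finrank ℝ E := by
  borelize E
  set μ : Measure E := Measure.addHaar
  have hdisj : (F : Set E).PairwiseDisjoint fun p => ball p (ε / 2) :=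
    fun p hp q hq hpq => ball_disjoint_ball (by linarith [hsep hp hq hpq])
  have hsub : (⋃ p ∈ F, ball p (ε / 2)) ⊆ ball 0 (R + ε / 2) := by
    refine Set.iUnion₂_subset fun p hp x hx => ?_
    rw [mem_ball, dist_eq_norm] at hx
    rw [mem_ball_zero_iff]
    linarith [norm_le_norm_add_norm_sub' x p, hF p hp]
  have hunit_pos : μ (ball 0 1) ≠ 0 := (measure_ball_pos μ 0 one_pos).ne'
  have hunit_fin : μ (ball 0 1) ≠ ⊤ := measure_ball_lt_top.ne
  have hvol : (F.card : ℝ≥0∞) * ENNReal.ofReal ((ε / 2) ^ finrank ℝ E) ≤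
      ENNReal.ofReal ((R + ε / 2) ^ finrank ℝ E) := by
    rw [← ENNReal.mul_le_mul_iff_left hunit_pos hunit_fin]
    calc (F.card : ℝ≥0∞) * ENNReal.ofReal ((ε / 2) ^ finrank ℝ E) * μ (ball 0 1)
        = ∑ p ∈ F, μ (ball p (ε / 2)) := by
          simp only [Measure.addHaar_ball_of_pos μ _ (half_pos hε), Finset.sum_const,
            nsmul_eq_mul, mul_assoc]
      _ = μ (⋃ p ∈ F, ball p (ε / 2)) :=
          (measure_biUnion_finset hdisj fun p _ => measurableSet_ball).symm
      _ ≤ μ (ball 0 (R + ε / 2)) := measure_mono hsub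
      _ = ENNReal.ofReal ((R + ε / 2) ^ finrank ℝ E) * μ (ball 0 1) :=
          Measure.addHaar_ball_of_pos μ 0 (by positivity)
  have hreal : (F.card : ℝ) * (ε / 2) ^ finrank ℝ E ≤ (R + ε / 2) ^ finrank ℝ E := by
    rwa [← ENNReal.ofReal_natCast, ← ENNReal.ofReal_mul (by positivity),
      ENNReal.ofReal_le_ofReal_iff (by positivity)] at hvol
  calc (F.card : ℝ) ≤ (R + ε / 2) ^ finrank ℝ E / (ε / 2) ^ finrank ℝ E := by
        rw [le_div_iff₀ (by positivity)]; exact hreal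
    _ = (2 * R / ε + 1) ^ finrank ℝ E := by
        rw [← div_pow]; congr 1; field_simp

theorem Set.finite_and_ncard_le_of_pairwise_le_dist {P : Set E} {ε R : ℝ} (hε : 0 < ε)
    (hR : 0 ≤ R) (hP : ∀ p ∈ P, ‖p‖ ≤ R) (hsep : P.Pairwise fun p q => ε ≤ dist p q) :
    P.Finite ∧ (P.ncard : ℝ) ≤ (2 * R / ε + 1) ^ finrank ℝ E := by
  have hbound : ∀ F : Finset E, ↑F ⊆ P → (F.card : ℝ) ≤ (2 * R / ε + 1) ^ finrank ℝ E :=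
    fun F hF => F.card_le_of_pairwise_le_dist hε hR (fun p hp => hP p (hF hp)) (hsep.mono hF)
  have hfin : P.Finite := by
    by_contra hinf
    obtain ⟨F, hFP, hcard⟩ :=
      Set.Infinite.exists_subset_card_eq hinf (⌈(2 * R / ε + 1) ^ finrank ℝ E⌉₊ + 1)
    have := hbound F hFP
    rw [hcard, Nat.cast_add_one] at this
    linarith [Nat.le_ceil ((2 * R / ε + 1) ^ finrank ℝ E)]
  refine ⟨hfin, ?_⟩
  simpa [Set.ncard_eq_toFinset_card P hfin] using hbound hfin.toFinset (by simp)

end Packing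

theorem le_of_forall_pow_le_mul_pow {a b K : ℝ} (hb : 0 < b) (h : ∀ k : ℕ, a ^ k ≤ K * b ^ k) :
    a ≤ b := by
  by_contra! hba
  obtain ⟨k, hk⟩ := pow_unbounded_of_one_lt K ((one_lt_div hb).2 hba)
  have := h k
  rw [div_pow, lt_div_iff₀ (by positivity)] at hk
  linarith

theorem le_pow_of_mul_le_of_polynomial_bound {N : ℝ → ℝ} {μ M m C : ℝ} {d : ℕ} (hμ : 1 < μ)
    (hM : 0 ≤ M) (hm : 0 ≤ m) (hN0 : 1 ≤ N 0) (hstep : ∀ r, 0 ≤ r → m * N r ≤ N (μ * r + M))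
    (hpoly : ∀ r, 0 ≤ r → N r ≤ C * (r + 1) ^ d) : m ≤ μ ^ d := by
  set b := M / (μ - 1)
  have hb : 0 ≤ b := div_nonneg hM (by linarith)
  have hbM : b * (μ - 1) = M := div_mul_cancel₀ M (by linarith)
  have hrk : ∀ k : ℕ, 0 ≤ b * (μ ^ k - 1) :=
    fun k => mul_nonneg hb (by linarith [one_le_pow₀ (n := k) hμ.le])
  -- radii `r_k = b (μ^k - 1)` solve `r_{k+1} = μ r_k + M`, `r_0 = 0`
  have hiter : ∀ k : ℕ, m ^ k ≤ N (b * (μ ^ k - 1)) := by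
    intro k
    induction k with
    | zero => simpa using hN0
    | succ k ih =>
      calc m ^ (k + 1) = m * m ^ k := pow_succ' m k
        _ ≤ m * N (b * (μ ^ k - 1)) := mul_le_mul_of_nonneg_left ih hm
        _ ≤ N (μ * (b * (μ ^ k - 1)) + M) := hstep _ (hrk k)
        _ = N (b * (μ ^ (k + 1) - 1)) := by
          congr 1
          rw [← hbM]
          ring
  have hC : 0 ≤ C := by
    have h := hpoly 0 le_rfl
    rw [zero_add, one_pow, mul_one] at h
    linarith
  refine le_of_forall_pow_le_mul_pow (pow_pos (by linarith) d) (K := C * (b + 1) ^ d) fun k => ?_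
  calc m ^ k ≤ C * (b * (μ ^ k - 1) + 1) ^ d := (hiter k).trans (hpoly _ (hrk k))
    _ ≤ C * ((b + 1) * μ ^ k) ^ d := by
        gcongr
        · linarith [hrk k]
        · nlinarith [one_le_pow₀ (n := k) hμ.le]
    _ = C * (b + 1) ^ d * (μ ^ d) ^ k := by
        rw [mul_pow, ← pow_mul, ← pow_mul, mul_comm k d, mul_assoc]

theorem Subgroup.exists_fin_distinct_cosets_of_relIndex_eq_zero {G : Type*} [Group G]
    {H K : Subgroup G} (h : H.relIndex K = 0) (m : ℕ) :
    ∃ g : Fin m → G, (∀ i, g i ∈ K) ∧ ∀ i j, (g j)⁻¹ * g i ∈ H → i = j := by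
  have : Infinite (K ⧸ H.subgroupOf K) := Subgroup.index_eq_zero_iff_infinite.mp h
  let e := Infinite.natEmbedding (K ⧸ H.subgroupOf K)
  choose g hg using fun i : Fin m => QuotientGroup.mk_surjective (e i)
  refine ⟨fun i => g i, fun i => (g i).2, fun i j hij => ?_⟩
  have hji : (g j : K ⧸ H.subgroupOf K) = g i := QuotientGroup.eq.mpr hij
  rw [hg, hg] at hji
  exact Fin.ext (e.injective hji).symm

section Conjugation

variable {E : Type*} [NormedAddCommGroup E] [NormedSpace ℝ E]

theorem dist_map_of_norm_map_eq (A : E ≃ₗ[ℝ] E) {lam : ℝ} (hA : ∀ x, ‖A x‖ = lam * ‖x‖)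
    (x y : E) : dist (A x) (A y) = lam * dist x y := by
  rw [dist_eq_norm, dist_eq_norm, ← map_sub, hA]

def conjHom (A : E ≃ₗ[ℝ] E) {lam : ℝ} (hA : ∀ x, ‖A x‖ = lam * ‖x‖) : (E ≃ᵢ E) →* (E ≃ᵢ E) where
  toFun γ :=
    { toEquiv := A.toEquiv.symm.trans (γ.toEquiv.trans A.toEquiv)
      isometry_toFun := Isometry.of_dist_eq fun x y => by
        change dist (A (γ (A.symm x))) (A (γ (A.symm y))) = dist x y
        rw [dist_map_of_norm_map_eq A hA, γ.dist_eq, ← dist_map_of_norm_map_eq A hA,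
          A.apply_symm_apply, A.apply_symm_apply] }
  map_one' := by ext x; simp
  map_mul' γ δ := by ext x; simp

@[simp]
theorem conjHom_apply (A : E ≃ₗ[ℝ] E) {lam : ℝ} (hA : ∀ x, ‖A x‖ = lam * ‖x‖) (γ : E ≃ᵢ E)
    (x : E) : conjHom A hA γ x = A (γ (A.symm x)) := rfl

theorem conjHom_injective (A : E ≃ₗ[ℝ] E) {lam : ℝ} (hA : ∀ x, ‖A x‖ = lam * ‖x‖) :
    Function.Injective (conjHom A hA) := by
  intro γ δ h
  ext x
  simpa using congrArg (fun f : E ≃ᵢ E => A.symm (f (A x))) h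

theorem mem_map_conjHom_iff (A : E ≃ₗ[ℝ] E) {lam : ℝ} (hA : ∀ x, ‖A x‖ = lam * ‖x‖)
    {Γ : Subgroup (E ≃ᵢ E)} {δ : E ≃ᵢ E} :
    δ ∈ Γ.map (conjHom A hA) ↔ ∃ γ ∈ Γ, ∀ x, δ x = A (γ (A.symm x)) := by
  simp [IsometryEquiv.ext_iff, eq_comm]

end Conjugation

section Tran

variable {n : ℕ}

theorem norm_tran_mul_le (α β : Isom n) : ‖tran (α * β)‖ ≤ ‖tran α‖ + ‖tran β‖ := by
  calc ‖α (β 0)‖ ≤ ‖α 0‖ + dist (α (β 0)) (α 0) := by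
        simpa [dist_eq_norm] using norm_le_norm_add_norm_sub' (α (β 0)) (α 0)
    _ = ‖tran α‖ + ‖tran β‖ := by rw [α.dist_eq, dist_zero_right]; rfl

theorem norm_tran_conjHom (A : En n ≃ₗ[ℝ] En n) {lam : ℝ} (hA : ∀ x, ‖A x‖ = lam * ‖x‖)
    (γ : Isom n) : ‖tran (conjHom A hA γ)‖ = lam * ‖tran γ‖ := by
  simp [tran, hA]

end Tran

section Discrete

variable {n : ℕ}

theorem IsDiscreteSubgroup.exists_finset_separating {Γ : Subgroup (Isom n)}
    (hΓ : IsDiscreteSubgroup Γ) :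
    ∃ ε > 0, ∃ T : Finset (En n), (∀ y ∈ T, ‖y‖ ≤ 1) ∧
      ∀ γ ∈ Γ, ∀ δ ∈ Γ, γ ≠ δ → ∃ y ∈ T, ε ≤ dist (γ y) (δ y) := by
  obtain ⟨ε, hε, hd⟩ := hΓ
  obtain ⟨T, hT1, hTfin, hcover⟩ :=
    finite_cover_balls_of_compact (isCompact_closedBall (0 : En n) 1) (by positivity : 0 < ε / 4)
  refine ⟨ε / 2, by positivity, hTfin.toFinset, fun y hy => ?_, fun γ hγ δ hδ hne => ?_⟩
  · simpa using hT1 (hTfin.mem_toFinset.mp hy)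
  obtain ⟨x, hx, hεx⟩ := hd (δ⁻¹ * γ) (Γ.mul_mem (Γ.inv_mem hδ) hγ)
    (by rwa [Ne, inv_mul_eq_one, eq_comm])
  obtain ⟨y, hyT, hxy⟩ : ∃ y ∈ T, x ∈ ball y (ε / 4) := by
    simpa using hcover (mem_closedBall_zero_iff.mpr hx)
  refine ⟨y, hTfin.mem_toFinset.mpr hyT, ?_⟩
  have hγδ : dist ((δ⁻¹ * γ) x) x = dist (γ x) (δ x) := by
    rw [← δ.dist_eq]
    simp
  rw [hγδ] at hεx
  have := dist_triangle4 (γ x) (γ y) (δ y) (δ x)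
  rw [γ.dist_eq, δ.dist_eq, dist_comm y] at this
  rw [mem_ball] at hxy
  linarith

theorem IsDiscreteSubgroup.exists_polynomial_growth {Γ : Subgroup (Isom n)}
    (hΓ : IsDiscreteSubgroup Γ) :
    ∃ (C : ℝ) (d : ℕ), ∀ r, 0 ≤ r →
      {γ | γ ∈ Γ ∧ ‖tran γ‖ ≤ r}.Finite ∧ (NCount Γ r : ℝ) ≤ C * (r + 1) ^ d := by
  obtain ⟨ε, hε, T, hT1, hsep⟩ := hΓ.exists_finset_separating
  let φ : Isom n → (T → En n) := fun γ y => γ y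
  refine ⟨(2 / ε + 1) ^ finrank ℝ (T → En n), finrank ℝ (T → En n), fun r hr => ?_⟩
  set S := {γ | γ ∈ Γ ∧ ‖tran γ‖ ≤ r}
  have hinj : Set.InjOn φ S := by
    intro γ hγ δ hδ h
    by_contra hne
    obtain ⟨y, hy, hle⟩ := hsep γ hγ.1 δ hδ.1 hne
    rw [show γ y = δ y from congrFun h ⟨y, hy⟩, dist_self] at hle
    linarith
  have hbdd : ∀ p ∈ φ '' S, ‖p‖ ≤ r + 1 := by
    rintro _ ⟨γ, hγ, rfl⟩
    refine (pi_norm_le_iff_of_nonneg (by positivity)).mpr fun y => ?_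
    calc ‖γ y‖ ≤ ‖γ 0‖ + dist (γ y) (γ 0) := by
          simpa [dist_eq_norm] using norm_le_norm_add_norm_sub' (γ y) (γ 0)
      _ ≤ r + 1 := by
          have hγr : ‖γ 0‖ ≤ r := hγ.2
          rw [γ.dist_eq, dist_zero_right]
          linarith [hT1 y y.2]
  have hsepP : (φ '' S).Pairwise fun p q => ε ≤ dist p q := by
    rintro _ ⟨γ, hγ, rfl⟩ _ ⟨δ, hδ, rfl⟩ hne
    obtain ⟨y, hy, hle⟩ := hsep γ hγ.1 δ hδ.1 (fun h => hne (h ▸ rfl))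
    exact hle.trans (dist_le_pi_dist (φ γ) (φ δ) ⟨y, hy⟩)
  obtain ⟨hfin, hcard⟩ := Set.finite_and_ncard_le_of_pairwise_le_dist hε (by positivity) hbdd hsepP
  refine ⟨hfin.of_finite_image hinj, ?_⟩
  calc (NCount Γ r : ℝ) = ((φ '' S).ncard : ℝ) := by rw [hinj.ncard_image]; rfl
    _ ≤ (2 * (r + 1) / ε + 1) ^ finrank ℝ (T → En n) := hcard
    _ ≤ ((2 / ε + 1) * (r + 1)) ^ finrank ℝ (T → En n) := by
        gcongr
        rw [mul_div_right_comm, add_mul, one_mul]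
        linarith
    _ = _ := mul_pow _ _ _

end Discrete

theorem card_mul_NCount_le {n : ℕ} {Γ : Subgroup (Isom n)} (A : En n ≃ₗ[ℝ] En n) {lam : ℝ}
    (hlam : 0 ≤ lam) (hA : ∀ x, ‖A x‖ = lam * ‖x‖) (hle : Γ.map (conjHom A hA) ≤ Γ) {m : ℕ}
    {g : Fin m → Isom n} (hgΓ : ∀ i, g i ∈ Γ)
    (hg : ∀ i j, (g j)⁻¹ * g i ∈ Γ.map (conjHom A hA) → i = j) {M r R : ℝ}
    (hgM : ∀ i, ‖tran (g i)‖ ≤ M) (hR : lam * r + M ≤ R)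
    (hfin : {γ | γ ∈ Γ ∧ ‖tran γ‖ ≤ R}.Finite) :
    m * NCount Γ r ≤ NCount Γ R := by
  set c := conjHom A hA
  have key := Set.ncard_le_ncard_of_injOn (fun p : Fin m × Isom n => g p.1 * c p.2)
    (s := Set.univ ×ˢ {γ | γ ∈ Γ ∧ ‖tran γ‖ ≤ r}) ?_ ?_ hfin
  · rwa [Set.ncard_prod, Set.ncard_univ, Nat.card_eq_fintype_card, Fintype.card_fin] at key
  · rintro ⟨i, γ⟩ ⟨-, hγΓ, hγr⟩
    refine ⟨Γ.mul_mem (hgΓ i) (hle ⟨γ, hγΓ, rfl⟩), ?_⟩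
    calc ‖tran (g i * c γ)‖ ≤ ‖tran (g i)‖ + lam * ‖tran γ‖ := by
          simpa only [c, norm_tran_conjHom] using norm_tran_mul_le (g i) (c γ)
      _ ≤ R := by nlinarith [hgM i]
  · rintro ⟨i, γ⟩ ⟨-, hγΓ, -⟩ ⟨j, δ⟩ ⟨-, hδΓ, -⟩ h
    simp only at h
    have hij : i = j := hg i j ⟨δ * γ⁻¹, Γ.mul_mem hδΓ (Γ.inv_mem hγΓ), by
      rw [map_mul, map_inv, eq_inv_mul_iff_mul_eq, ← mul_assoc, ← h, mul_inv_cancel_right]⟩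
    subst hij
    rw [conjHom_injective A hA (mul_left_cancel h)]

/-- Let `Γ ≤ E(n)` be discrete and `A = λA'` a linear conformal bijection
with `A' ∈ O(n)`, `λ > 0`. If `AΓA⁻¹ ⊆ Γ`, then `AΓA⁻¹` is a subgroup of finite index in `Γ`. -/
theorem conjugation_finite_index {n : ℕ} (Γ : Subgroup (Isom n))
    (hΓ : IsDiscreteSubgroup Γ) (A : En n ≃ₗ[ℝ] En n) (lam : ℝ)
    (hlam : 0 < lam) (hconf : ∀ x : En n, ‖A x‖ = lam * ‖x‖)
    (hconj : ∀ γ ∈ Γ, ∃ γ' ∈ Γ, ∀ x : En n, γ' x = A (γ (A.symm x))) :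
    ∃ H : Subgroup (Isom n), H ≤ Γ ∧
      (∀ δ : Isom n, δ ∈ H ↔ ∃ γ ∈ Γ, ∀ x : En n, δ x = A (γ (A.symm x))) ∧
      H.relIndex Γ ≠ 0 := by
  have hle : Γ.map (conjHom A hconf) ≤ Γ := by
    rintro δ hδ
    obtain ⟨γ, hγ, hδγ⟩ := (mem_map_conjHom_iff A hconf).mp hδ
    obtain ⟨γ', hγ', hγ'x⟩ := hconj γ hγ
    rwa [show δ = γ' from IsometryEquiv.ext fun x => (hδγ x).trans (hγ'x x).symm]
  refine ⟨_, hle, fun δ => mem_map_conjHom_iff A hconf, fun hindex => ?_⟩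
  obtain ⟨C, d, hgrowth⟩ := hΓ.exists_polynomial_growth
  set μ := max lam 2
  set m := ⌈μ ^ d⌉₊ + 1
  obtain ⟨g, hgΓ, hg⟩ := Subgroup.exists_fin_distinct_cosets_of_relIndex_eq_zero hindex m
  set M := ∑ i, ‖tran (g i)‖
  have hM : 0 ≤ M := Finset.sum_nonneg fun i _ => norm_nonneg _
  have hstep : ∀ r, 0 ≤ r → (m : ℝ) * NCount Γ r ≤ NCount Γ (μ * r + M) :=
    fun r hr => by
      exact_mod_cast card_mul_NCount_le A hlam.le hconf hle hgΓ hg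
        (fun i => Finset.single_le_sum (fun j _ => norm_nonneg (tran (g j))) (Finset.mem_univ i))
        (by nlinarith [le_max_left lam 2]) (hgrowth _ (by positivity)).1
  have hN0 : (1 : ℝ) ≤ NCount Γ 0 := by
    exact_mod_cast (Set.ncard_pos (hgrowth 0 le_rfl).1).mpr ⟨1, Γ.one_mem, by simp [tran]⟩
  have hm : (m : ℝ) ≤ μ ^ d := le_pow_of_mul_le_of_polynomial_bound
    (lt_max_of_lt_right one_lt_two) hM (Nat.cast_nonneg m) hN0 hstep fun r hr => (hgrowth r hr).2
  have : (m : ℝ) = ⌈μ ^ d⌉₊ + 1 := by push_cast [m]; rfl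
  linarith [Nat.le_ceil (μ ^ d)]
end
end
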